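/- Fix a prime p and let μ be an additive Haar measure on ℚ_p normalized so that μ({x ∈ ℚ_p : ‖x‖_p ≤ 1}) = 1. Define Γ_p(s) = (1 − p^{s−1})/(1 − p^{−s}) for real s with p^{−s} ≠ 1. Then for all real numbers s₁, s₂ with 0 < s₁, 0 < s₂, and s₁ + s₂ < 1, the Beta integral over all of ℚ_p satisfies ∫_{ℚ_p} ‖x‖_p^{s₁−1} · ‖1 − x‖_p^{s₂−1} dμ(x) = Γ_p(s₁)Γ_p(s₂)/Γ_p(s₁ + s₂). -/

import Mathlib

/-!
Split `ℚ_p` into `ℤ_p` and its complement. On `ℤ_p` at most one of `‖x‖`, `‖1 - x‖` differs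
from `1`, so the integrand is `‖x‖^(s₁-1) + ‖1 - x‖^(s₂-1) - 1` there, and by translation
invariance both terms integrate to `∫_{ℤ_p} ‖x‖^(s-1) dμ = (1 - p⁻¹) / (1 - p^(-s))`. Off `ℤ_p`
we have `‖1 - x‖ = ‖x‖`, so the integrand is `‖x‖^(s₁+s₂-2)`. Both radial integrals are geometric
series over the spheres `‖x‖ = p^n`, of measure `(1 - p⁻¹) p^n` because a ball of radius `p^n`
is the disjoint union of `p` translates of the ball of radius `p^(n-1)`. What remains is an
identity of rational functions in `p^(-s₁)`, `p^(-s₂)` and `p^(s₁+s₂-1)`, whose product is `p⁻¹`.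
-/

open MeasureTheory

/-- The `p`-adic Gamma function `Γ_p(s) = (1 − p^{s−1})/(1 − p^{−s})` for the
multiplicative character `π_s(x) = |x|^s` with trivial sign. -/
noncomputable def padicGamma (p : ℕ) (s : ℝ) : ℝ :=
  (1 - (p : ℝ) ^ (s - 1)) / (1 - (p : ℝ) ^ (-s))

open Metric Set
open scoped ENNReal

namespace IsUltrametricDist

variable {R : Type*} [SeminormedRing R] [NormOneClass R] [IsUltrametricDist R] {x : R}

lemma norm_one_sub_eq_one_of_norm_lt_one (hx : ‖x‖ < 1) : ‖1 - x‖ = 1 := by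
  rw [sub_eq_add_neg, norm_add_eq_max_of_norm_ne_norm (by simpa using hx.ne'), norm_one,
    norm_neg, max_eq_left hx.le]

lemma norm_one_sub_eq_of_one_lt_norm (hx : 1 < ‖x‖) : ‖1 - x‖ = ‖x‖ := by
  rw [sub_eq_add_neg, norm_add_eq_max_of_norm_ne_norm (by simpa using hx.ne), norm_one,
    norm_neg, max_eq_right hx.le]

lemma norm_eq_one_or_norm_one_sub_eq_one (hx : ‖x‖ ≤ 1) : ‖x‖ = 1 ∨ ‖1 - x‖ = 1 :=
  hx.eq_or_lt.imp id norm_one_sub_eq_one_of_norm_lt_one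

end IsUltrametricDist

lemma ENNReal.tsum_ofReal_mul_geometric {c r : ℝ} (hc : 0 ≤ c) (hr₀ : 0 ≤ r) (hr₁ : r < 1) :
    ∑' k : ℕ, ENNReal.ofReal (c * r ^ k) = ENNReal.ofReal (c / (1 - r)) := by
  rw [← ENNReal.ofReal_tsum_of_nonneg (fun k => by positivity)
    ((summable_geometric_of_lt_one hr₀ hr₁).mul_left c), tsum_mul_left,
    tsum_geometric_of_lt_one hr₀ hr₁, div_eq_mul_inv]

namespace Padic

variable {p : ℕ} [hp : Fact p.Prime]

lemma one_lt_prime_cast : (1 : ℝ) < p := mod_cast hp.out.one_lt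

lemma prime_cast_pos : (0 : ℝ) < p := zero_lt_one.trans one_lt_prime_cast

lemma prime_cast_rpow_lt_one {x : ℝ} (hx : x < 0) : (p : ℝ) ^ x < 1 :=
  Real.rpow_lt_one_of_one_lt_of_neg one_lt_prime_cast hx

lemma one_sub_prime_cast_rpow_pos {x : ℝ} (hx : x < 0) : 0 < 1 - (p : ℝ) ^ x :=
  sub_pos.2 (prime_cast_rpow_lt_one hx)

lemma one_sub_inv_prime_cast_nonneg : 0 ≤ 1 - (p : ℝ)⁻¹ :=
  sub_nonneg.2 (inv_le_one_of_one_le₀ one_lt_prime_cast.le)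

lemma exists_lt_norm_sub_natCast_lt_one {y : ℚ_[p]} (hy : ‖y‖ ≤ 1) :
    ∃ k < p, ‖y - k‖ < 1 := by
  obtain ⟨k, hk, hmem⟩ := PadicInt.exists_mem_range (⟨y, hy⟩ : ℤ_[p])
  rw [IsLocalRing.mem_maximalIdeal, PadicInt.mem_nonunits] at hmem
  exact ⟨k, hk, hmem⟩

lemma ball_zpow_eq_closedBall (n : ℤ) :
    ball (0 : ℚ_[p]) ((p : ℝ) ^ n) = closedBall 0 ((p : ℝ) ^ (n - 1)) := by
  ext x
  simp [norm_lt_pow_iff_norm_le_pow_sub_one]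

lemma closedBall_zpow_eq_biUnion (n : ℤ) :
    closedBall (0 : ℚ_[p]) ((p : ℝ) ^ n) =
        ⋃ k ∈ Finset.range p,
        closedBall ((k : ℚ_[p]) * (p : ℚ_[p]) ^ (-n)) ((p : ℝ) ^ (n - 1)) := by
  have hp0 : (p : ℝ) ≠ 0 := prime_cast_pos.ne'
  have hp0' : (p : ℚ_[p]) ≠ 0 := by exact_mod_cast hp.out.ne_zero
  refine Subset.antisymm (fun x hx => ?_) (iUnion₂_subset fun k _ => ?_)
  · rw [mem_closedBall_zero_iff] at hx
    obtain ⟨k, hk, hlt⟩ := exists_lt_norm_sub_natCast_lt_one (y := (p : ℚ_[p]) ^ n * x) (by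
      rw [norm_mul, norm_p_zpow, zpow_neg]
      exact inv_mul_le_one_of_le₀ hx (by positivity))
    refine mem_biUnion (Finset.mem_range.2 hk) ?_
    have hle : ‖(p : ℚ_[p]) ^ n * x - k‖ ≤ (p : ℝ) ^ (0 - 1 : ℤ) :=
      (norm_lt_pow_iff_norm_le_pow_sub_one _ 0).1 (by simpa using hlt)
    have hx' : x - k * (p : ℚ_[p]) ^ (-n) =
        (p : ℚ_[p]) ^ (-n) * ((p : ℚ_[p]) ^ n * x - k) := by
      rw [mul_sub, ← mul_assoc, ← zpow_add₀ hp0', neg_add_cancel, zpow_zero, one_mul,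
        mul_comm]
    rw [mem_closedBall, dist_eq_norm, hx', norm_mul, norm_p_zpow, neg_neg, sub_eq_add_neg n,
      zpow_add₀ hp0]
    exact mul_le_mul_of_nonneg_left hle (by positivity)
  · have hc : (k : ℚ_[p]) * (p : ℚ_[p]) ^ (-n) ∈ closedBall 0 ((p : ℝ) ^ n) := by
      rw [mem_closedBall_zero_iff, norm_mul, norm_p_zpow, neg_neg]
      exact mul_le_of_le_one_left (by positivity)
        (IsUltrametricDist.norm_natCast_le_one ℚ_[p] k)
    rw [IsUltrametricDist.closedBall_eq_of_mem hc]
    exact closedBall_subset_closedBall (zpow_le_zpow_right₀ one_lt_prime_cast.le (by omega))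

lemma pairwiseDisjoint_closedBall_zpow (n : ℤ) :
    (Finset.range p : Set ℕ).PairwiseDisjoint
      fun k => closedBall ((k : ℚ_[p]) * (p : ℚ_[p]) ^ (-n)) ((p : ℝ) ^ (n - 1)) := by
  intro k hk j hj hkj
  rw [Function.onFun, Set.disjoint_left]
  intro x hxk hxj
  have hdist :=
    (IsUltrametricDist.dist_triangle_max ((k : ℚ_[p]) * (p : ℚ_[p]) ^ (-n)) x _).trans
      (max_le (by rwa [dist_comm]) hxj)
  rw [dist_eq_norm, ← sub_mul, norm_mul, norm_p_zpow, neg_neg,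
    zpow_sub_one₀ prime_cast_pos.ne', mul_comm ‖_‖] at hdist
  have hdvd : (p : ℤ) ∣ (k - j : ℤ) := by
    rw [← norm_intCast_lt_one_iff]
    push_cast
    refine ((norm_lt_pow_iff_norm_le_pow_sub_one _ 0).2 ?_).trans_eq (zpow_zero _)
    simpa using le_of_mul_le_mul_left hdist (zpow_pos prime_cast_pos n)
  simp only [Finset.coe_range, mem_Iio] at hk hj
  have := Int.eq_zero_of_abs_lt_dvd hdvd (abs_lt.2 ⟨by omega, by omega⟩)
  omega

lemma closedBall_one_sdiff_zero_eq_iUnion_sphere :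
    closedBall (0 : ℚ_[p]) 1 \ {0} = ⋃ k : ℕ, sphere 0 ((p : ℝ) ^ (-(k : ℤ))) := by
  ext x
  simp only [mem_sdiff, mem_closedBall_zero_iff, mem_singleton_iff, mem_iUnion,
    mem_sphere_zero_iff_norm]
  constructor
  · rintro ⟨hx, hx0⟩
    rw [norm_eq_zpow_neg_valuation hx0] at hx ⊢
    have : 0 ≤ x.valuation := by
      simpa using (zpow_le_one_iff_right₀ one_lt_prime_cast).1 hx
    exact ⟨x.valuation.toNat, by rw [Int.toNat_of_nonneg this]⟩
  · rintro ⟨k, hk⟩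
    refine ⟨hk ▸ (zpow_le_one_iff_right₀ one_lt_prime_cast).2 (by omega), fun hx0 => ?_⟩
    rw [hx0, norm_zero] at hk
    exact (zpow_pos prime_cast_pos _).ne hk

lemma compl_closedBall_one_eq_iUnion_sphere :
    (closedBall (0 : ℚ_[p]) 1)ᶜ = ⋃ k : ℕ, sphere 0 ((p : ℝ) ^ ((k : ℤ) + 1)) := by
  ext x
  simp only [mem_compl_iff, mem_closedBall_zero_iff, not_le, mem_iUnion,
    mem_sphere_zero_iff_norm]
  constructor
  · intro hx
    have hx0 : x ≠ 0 := by rintro rfl; simp at hx; linarith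
    rw [norm_eq_zpow_neg_valuation hx0] at hx ⊢
    have := (one_lt_zpow_iff_right₀ one_lt_prime_cast).1 hx
    exact ⟨(-x.valuation - 1).toNat, by rw [Int.toNat_of_nonneg (by omega)]; ring_nf⟩
  · rintro ⟨k, hk⟩
    exact hk ▸ (one_lt_zpow_iff_right₀ one_lt_prime_cast).2 (by omega)

lemma beta_sum_eq_padicGamma {s₁ s₂ : ℝ} (hs₁ : 0 < s₁) (hs₂ : 0 < s₂) (hsum : s₁ + s₂ < 1) :
    (1 - (p : ℝ)⁻¹) / (1 - (p : ℝ) ^ (-s₁)) + (1 - (p : ℝ)⁻¹) / (1 - (p : ℝ) ^ (-s₂)) - 1 +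
        (1 - (p : ℝ)⁻¹) * (p : ℝ) ^ (s₁ + s₂ - 1) / (1 - (p : ℝ) ^ (s₁ + s₂ - 1)) =
      padicGamma p s₁ * padicGamma p s₂ / padicGamma p (s₁ + s₂) := by
  have hpow (x y : ℝ) : (p : ℝ) ^ (x + y) = p ^ x * p ^ y :=
    Real.rpow_add prime_cast_pos x y
  have ha := one_sub_prime_cast_rpow_pos (p := p) (neg_lt_zero.2 hs₁)
  have hb := one_sub_prime_cast_rpow_pos (p := p) (neg_lt_zero.2 hs₂)
  have hc := one_sub_prime_cast_rpow_pos (p := p) (by linarith : s₁ + s₂ - 1 < 0)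
  have hab := one_sub_prime_cast_rpow_pos (p := p) (by linarith : -s₁ + -s₂ < 0)
  have hinv : (p : ℝ)⁻¹ = p ^ (-s₁) * p ^ (-s₂) * p ^ (s₁ + s₂ - 1) := by
    rw [← hpow, ← hpow, ← Real.rpow_neg_one]; ring_nf
  have h₁ : (p : ℝ) ^ (s₁ - 1) = p ^ (s₁ + s₂ - 1) * p ^ (-s₂) := by rw [← hpow]; ring_nf
  have h₂ : (p : ℝ) ^ (s₂ - 1) = p ^ (s₁ + s₂ - 1) * p ^ (-s₁) := by rw [← hpow]; ring_nf
  have h₁₂ : (p : ℝ) ^ (-(s₁ + s₂)) = p ^ (-s₁) * p ^ (-s₂) := by rw [← hpow]; ring_nf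
  rw [hpow] at hab
  rw [padicGamma, padicGamma, padicGamma, h₁, h₂, h₁₂, hinv]
  generalize (p : ℝ) ^ (-s₁) = a at *
  generalize (p : ℝ) ^ (-s₂) = b at *
  generalize (p : ℝ) ^ (s₁ + s₂ - 1) = c at *
  field_simp [ha.ne', hb.ne', hc.ne', hab.ne']
  ring

section Measure

variable [MeasurableSpace ℚ_[p]] [BorelSpace ℚ_[p]] (μ : Measure ℚ_[p]) [μ.IsAddHaarMeasure]

lemma measure_closedBall_zpow_eq_mul (n : ℤ) :
    μ (closedBall 0 ((p : ℝ) ^ n)) = p * μ (closedBall 0 ((p : ℝ) ^ (n - 1))) := by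
  rw [closedBall_zpow_eq_biUnion, measure_biUnion_finset (pairwiseDisjoint_closedBall_zpow n)
    fun _ _ => measurableSet_closedBall]
  simp only [Measure.addHaar_closedBall_center, Finset.sum_const, Finset.card_range,
    nsmul_eq_mul]

lemma measure_closedBall_zpow (hμ : μ (closedBall 0 1) = 1) (n : ℤ) :
    μ (closedBall 0 ((p : ℝ) ^ n)) = ENNReal.ofReal ((p : ℝ) ^ n) := by
  have hpE : (p : ℝ≥0∞) = ENNReal.ofReal p := (ENNReal.ofReal_natCast p).symm
  have hpow (m : ℤ) :
      ENNReal.ofReal ((p : ℝ) ^ m) = p * ENNReal.ofReal ((p : ℝ) ^ (m - 1)) := by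
    rw [hpE, ← ENNReal.ofReal_mul prime_cast_pos.le, ← zpow_one_add₀ prime_cast_pos.ne',
      add_sub_cancel]
  induction n using Int.induction_on with
  | zero => simpa using hμ
  | succ m ih => rw [measure_closedBall_zpow_eq_mul, add_sub_cancel_right, ih, hpow (m + 1),
      add_sub_cancel_right]
  | pred m ih =>
    rw [measure_closedBall_zpow_eq_mul, hpow] at ih
    exact (ENNReal.mul_right_inj (by simpa using hp.out.ne_zero) (ENNReal.natCast_ne_top p)).1 ih

lemma measure_sphere_zpow (hμ : μ (closedBall 0 1) = 1) (n : ℤ) :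
    μ (sphere 0 ((p : ℝ) ^ n)) = ENNReal.ofReal ((1 - (p : ℝ)⁻¹) * (p : ℝ) ^ n) := by
  rw [← closedBall_sdiff_ball, measure_sdiff ball_subset_closedBall
    measurableSet_ball.nullMeasurableSet measure_ball_lt_top.ne, ball_zpow_eq_closedBall,
    measure_closedBall_zpow μ hμ, measure_closedBall_zpow μ hμ,
    ← ENNReal.ofReal_sub _ (zpow_pos prime_cast_pos _).le, zpow_sub_one₀ prime_cast_pos.ne']
  ring_nf

lemma setLIntegral_sphere_norm_rpow (hμ : μ (closedBall 0 1) = 1) (t : ℝ) (n : ℤ) :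
    ∫⁻ x in sphere 0 ((p : ℝ) ^ n), ENNReal.ofReal (‖x‖ ^ t) ∂μ =
      ENNReal.ofReal ((1 - (p : ℝ)⁻¹) * ((p : ℝ) ^ (t + 1)) ^ n) := by
  rw [setLIntegral_congr_fun isClosed_sphere.measurableSet
      fun x hx => by rw [mem_sphere_zero_iff_norm.1 hx],
    setLIntegral_const, measure_sphere_zpow μ hμ, ← ENNReal.ofReal_mul (by positivity)]
  congr 1
  rw [← Real.rpow_intCast_mul prime_cast_pos.le, Real.rpow_add prime_cast_pos, Real.rpow_one,
    mul_zpow, ← Real.rpow_mul_intCast prime_cast_pos.le, mul_comm t]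
  ring

lemma setLIntegral_iUnion_sphere_norm_rpow (hμ : μ (closedBall 0 1) = 1) (t : ℝ) {e : ℕ → ℤ}
    (he : Function.Injective e) :
    ∫⁻ x in ⋃ k, sphere 0 ((p : ℝ) ^ e k), ENNReal.ofReal (‖x‖ ^ t) ∂μ =
      ∑' k, ENNReal.ofReal ((1 - (p : ℝ)⁻¹) * ((p : ℝ) ^ (t + 1)) ^ e k) := by
  refine (lintegral_iUnion (fun _ => isClosed_sphere.measurableSet) (fun i j hij => ?_) _).trans
    (tsum_congr fun k => setLIntegral_sphere_norm_rpow μ hμ t (e k))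
  refine Set.disjoint_left.2 fun x hi hj => hij (he ?_)
  rw [mem_sphere_zero_iff_norm] at hi hj
  exact zpow_right_injective₀ prime_cast_pos one_lt_prime_cast.ne' (hi.symm.trans hj)

lemma setLIntegral_closedBall_norm_rpow (hμ : μ (closedBall 0 1) = 1) {s : ℝ} (hs : 0 < s) :
    ∫⁻ x in closedBall 0 1, ENNReal.ofReal (‖x‖ ^ (s - 1)) ∂μ =
      ENNReal.ofReal ((1 - (p : ℝ)⁻¹) / (1 - (p : ℝ) ^ (-s))) := by
  rw [← setLIntegral_congr (sdiff_null_ae_eq_self (measure_singleton 0)),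
    closedBall_one_sdiff_zero_eq_iUnion_sphere, setLIntegral_iUnion_sphere_norm_rpow μ hμ _
      (e := fun k : ℕ => -(k : ℤ)) fun _ _ h => by simpa using h]
  simp_rw [sub_add_cancel, zpow_neg, zpow_natCast, ← inv_pow, ← Real.rpow_neg prime_cast_pos.le]
  exact ENNReal.tsum_ofReal_mul_geometric one_sub_inv_prime_cast_nonneg
    (by positivity) (prime_cast_rpow_lt_one (neg_lt_zero.2 hs))

lemma setLIntegral_compl_closedBall_norm_rpow (hμ : μ (closedBall 0 1) = 1) {s : ℝ}
    (hs : s < 0) :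
    ∫⁻ x in (closedBall 0 1)ᶜ, ENNReal.ofReal (‖x‖ ^ (s - 1)) ∂μ =
      ENNReal.ofReal ((1 - (p : ℝ)⁻¹) * (p : ℝ) ^ s / (1 - (p : ℝ) ^ s)) := by
  rw [compl_closedBall_one_eq_iUnion_sphere, setLIntegral_iUnion_sphere_norm_rpow μ hμ _
      (e := fun k : ℕ => (k : ℤ) + 1) fun _ _ h => by simpa using h]
  simp_rw [sub_add_cancel, zpow_add_one₀ (Real.rpow_pos_of_pos prime_cast_pos s).ne',
    zpow_natCast, mul_comm (_ ^ _) ((p : ℝ) ^ s), ← mul_assoc]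
  exact ENNReal.tsum_ofReal_mul_geometric
    (mul_nonneg one_sub_inv_prime_cast_nonneg (by positivity)) (by positivity)
    (prime_cast_rpow_lt_one hs)

lemma setLIntegral_closedBall_one_comp_sub_one {g : ℚ_[p] → ℝ≥0∞} (hg : Measurable g) :
    ∫⁻ x in closedBall 0 1, g (x - 1) ∂μ = ∫⁻ x in closedBall 0 1, g x ∂μ := by
  have h : (fun x => x - 1) ⁻¹' closedBall (0 : ℚ_[p]) 1 = closedBall 0 1 := by
    ext x
    rw [mem_preimage, mem_closedBall_zero_iff, ← dist_eq_norm, ← mem_closedBall,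
      ← IsUltrametricDist.closedBall_eq_of_mem (mem_closedBall_zero_iff.2 norm_one.le)]
  conv_lhs => rw [← h]
  exact (measurePreserving_sub_right μ 1).setLIntegral_comp_preimage measurableSet_closedBall hg

lemma setLIntegral_closedBall_beta_add_one (hμ : μ (closedBall 0 1) = 1) {s₁ s₂ : ℝ}
    (hs₁ : 0 < s₁) (hs₂ : 0 < s₂) :
    ∫⁻ x in closedBall 0 1, ENNReal.ofReal (‖x‖ ^ (s₁ - 1) * ‖1 - x‖ ^ (s₂ - 1)) ∂μ + 1 =
      ENNReal.ofReal ((1 - (p : ℝ)⁻¹) / (1 - (p : ℝ) ^ (-s₁))) +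
        ENNReal.ofReal ((1 - (p : ℝ)⁻¹) / (1 - (p : ℝ) ^ (-s₂))) := by
  have hsplit : ∀ x ∈ closedBall (0 : ℚ_[p]) 1,
      ENNReal.ofReal (‖x‖ ^ (s₁ - 1) * ‖1 - x‖ ^ (s₂ - 1)) + 1 =
        ENNReal.ofReal (‖x‖ ^ (s₁ - 1)) + ENNReal.ofReal (‖x - 1‖ ^ (s₂ - 1)) := by
    intro x hx
    rw [norm_sub_rev x 1]
    rcases IsUltrametricDist.norm_eq_one_or_norm_one_sub_eq_one (mem_closedBall_zero_iff.1 hx)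
      with h | h <;> simp [h, add_comm]
  rw [← hμ, ← setLIntegral_one, ← lintegral_add_right _ measurable_const,
    setLIntegral_congr_fun measurableSet_closedBall hsplit, lintegral_add_left (by fun_prop),
    setLIntegral_closedBall_one_comp_sub_one μ (g := fun y => ENNReal.ofReal (‖y‖ ^ (s₂ - 1)))
      (by fun_prop),
    setLIntegral_closedBall_norm_rpow μ hμ hs₁, setLIntegral_closedBall_norm_rpow μ hμ hs₂]

lemma setLIntegral_compl_closedBall_beta (hμ : μ (closedBall 0 1) = 1) {s₁ s₂ : ℝ}
    (hsum : s₁ + s₂ < 1) :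
    ∫⁻ x in (closedBall 0 1)ᶜ, ENNReal.ofReal (‖x‖ ^ (s₁ - 1) * ‖1 - x‖ ^ (s₂ - 1)) ∂μ =
      ENNReal.ofReal
        ((1 - (p : ℝ)⁻¹) * (p : ℝ) ^ (s₁ + s₂ - 1) / (1 - (p : ℝ) ^ (s₁ + s₂ - 1))) := by
  rw [← setLIntegral_compl_closedBall_norm_rpow μ hμ (by linarith : s₁ + s₂ - 1 < 0)]
  refine setLIntegral_congr_fun measurableSet_closedBall.compl fun x hx => ?_
  have hx : 1 < ‖x‖ := by simpa using hx
  rw [IsUltrametricDist.norm_one_sub_eq_of_one_lt_norm hx,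
    ← Real.rpow_add (zero_lt_one.trans hx)]
  ring_nf

end Measure

end Padic

open Padic

/-- **The `p`-adic Beta function identity.**
For an additive Haar measure `μ` on `ℚ_p` normalized by `μ(ℤ_p) = 1` and real
`s₁, s₂ > 0` with `s₁ + s₂ < 1`, the Beta integral satisfies
`∫_{ℚ_p} ‖x‖^{s₁−1} ‖1−x‖^{s₂−1} dμ = Γ_p(s₁)Γ_p(s₂)/Γ_p(s₁+s₂)`. -/
theorem padic_beta_integral (p : ℕ) [Fact p.Prime]
    [MeasurableSpace ℚ_[p]] [BorelSpace ℚ_[p]]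
    (μ : Measure ℚ_[p]) [μ.IsAddHaarMeasure]
    (hμ : μ {x : ℚ_[p] | ‖x‖ ≤ 1} = 1)
    (s₁ s₂ : ℝ) (hs₁ : 0 < s₁) (hs₂ : 0 < s₂) (hsum : s₁ + s₂ < 1) :
    ∫ x : ℚ_[p], ‖x‖ ^ (s₁ - 1) * ‖1 - x‖ ^ (s₂ - 1) ∂μ
      = padicGamma p s₁ * padicGamma p s₂ / padicGamma p (s₁ + s₂) := by
  have hB : μ (closedBall 0 1) = 1 := by simpa [closedBall, dist_eq_norm] using hμ
  have hball := setLIntegral_closedBall_beta_add_one μ hB hs₁ hs₂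
  have hfin := ((le_self_add.trans_eq hball).trans_lt (by finiteness)).ne
  have hI {s : ℝ} (hs : 0 < s) : 0 ≤ (1 - (p : ℝ)⁻¹) / (1 - (p : ℝ) ^ (-s)) :=
    div_nonneg one_sub_inv_prime_cast_nonneg (one_sub_prime_cast_rpow_pos (by linarith)).le
  have hJ : 0 ≤ (1 - (p : ℝ)⁻¹) * (p : ℝ) ^ (s₁ + s₂ - 1) / (1 - (p : ℝ) ^ (s₁ + s₂ - 1)) :=
    div_nonneg (mul_nonneg one_sub_inv_prime_cast_nonneg (by positivity))
      (one_sub_prime_cast_rpow_pos (by linarith)).le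
  replace hball := congrArg ENNReal.toReal hball
  rw [ENNReal.toReal_add hfin ENNReal.one_ne_top,
    ENNReal.toReal_add ENNReal.ofReal_ne_top ENNReal.ofReal_ne_top,
    ENNReal.toReal_ofReal (hI hs₁), ENNReal.toReal_ofReal (hI hs₂), ENNReal.toReal_one] at hball
  rw [integral_eq_lintegral_of_nonneg_ae (ae_of_all _ fun x => by positivity) (by fun_prop),
    ← lintegral_add_compl _ measurableSet_closedBall, setLIntegral_compl_closedBall_beta μ hB hsum,
    ENNReal.toReal_add hfin ENNReal.ofReal_ne_top, ENNReal.toReal_ofReal hJ,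
    ← beta_sum_eq_padicGamma hs₁ hs₂ hsum]
  linarith
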